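/- arXiv:1402.6645 — 3 statements merged into one kernel-verified Lean document; each statement's English description precedes it below -/
import Mathlib

section
/- Let (X,<) be a strict order and let A, B ⊆ X be inhabited finite subsets. Then there exists a ∈ A such that a < b for all b ∈ B if and only if for every b ∈ B there exists a ∈ A with a < b. -/
/-! A strict order in this sense is transitive: from `a < b` cotransitivity gives `a < c` or
`c < b`, and the latter contradicts `b < c`. The nontrivial direction then goes by induction
on `B`: given a common lower bound `a ∈ A` of `B` and some `a' ∈ A` with `a' < b`,
cotransitivity at `a` yields either `a < b`, so `a` still works, or `a' < a`, so `a'` works by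
transitivity. -/

section StrictOrder

variable {X : Type*} {lt : X → X → Prop}

theorem lt_trans_of_asymm_of_cotrans (lt_asymm : ∀ a b, ¬ (lt a b ∧ lt b a))
    (lt_cotrans : ∀ a b x, lt a b → lt a x ∨ lt x b) {a b c : X}
    (hab : lt a b) (hbc : lt b c) : lt a c :=
  (lt_cotrans a b c hab).resolve_right fun hcb => lt_asymm b c ⟨hbc, hcb⟩

theorem Finset.exists_forall_lt_of_forall_exists_lt (lt_asymm : ∀ a b, ¬ (lt a b ∧ lt b a))
    (lt_cotrans : ∀ a b x, lt a b → lt a x ∨ lt x b) {A : Finset X} (hA : A.Nonempty)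
    (B : Finset X) (h : ∀ b ∈ B, ∃ a ∈ A, lt a b) : ∃ a ∈ A, ∀ b ∈ B, lt a b := by
  classical
  induction B using Finset.induction_on with
  | empty =>
    obtain ⟨a, ha⟩ := hA
    exact ⟨a, ha, by simp⟩
  | insert b B _ ih =>
    obtain ⟨a, ha, haB⟩ := ih fun c hc => h c (Finset.mem_insert_of_mem hc)
    obtain ⟨a', ha', ha'b⟩ := h b (Finset.mem_insert_self b B)
    rcases lt_cotrans a' b a ha'b with ha'a | hab
    · exact ⟨a', ha', Finset.forall_mem_insert .. |>.mpr
        ⟨ha'b, fun c hc => lt_trans_of_asymm_of_cotrans lt_asymm lt_cotrans ha'a (haB c hc)⟩⟩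
    · exact ⟨a, ha, Finset.forall_mem_insert .. |>.mpr ⟨hab, haB⟩⟩

end StrictOrder

theorem exists_forall_iff_forall_exists_of_strictOrder_general {X : Type*}
    (lt : X → X → Prop)
    (lt_asymm : ∀ a b, ¬ (lt a b ∧ lt b a))
    (lt_cotrans : ∀ a b x, lt a b → lt a x ∨ lt x b)
    (A B : Finset X) (hA : A.Nonempty) :
    (∃ a ∈ A, ∀ b ∈ B, lt a b) ↔ (∀ b ∈ B, ∃ a ∈ A, lt a b) :=
  ⟨fun ⟨a, ha, haB⟩ b hb => ⟨a, ha, haB b hb⟩,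
    Finset.exists_forall_lt_of_forall_exists_lt lt_asymm lt_cotrans hA B⟩

/-- For a strict order (asymmetric and cotransitive relation) `lt` on `X` and
inhabited finite subsets `A, B ⊆ X`: there exists `a ∈ A` with `a < b` for all
`b ∈ B` iff for every `b ∈ B` there exists `a ∈ A` with `a < b`. -/
theorem exists_forall_iff_forall_exists_of_strictOrder {X : Type*}
    (lt : X → X → Prop)
    (lt_asymm : ∀ a b, ¬ (lt a b ∧ lt b a))
    (lt_cotrans : ∀ a b x, lt a b → lt a x ∨ lt x b)
    (A B : Finset X) (hA : A.Nonempty) (hB : B.Nonempty) :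
    (∃ a ∈ A, ∀ b ∈ B, lt a b) ↔ (∀ b ∈ B, ∃ a ∈ A, lt a b) :=
  exists_forall_iff_forall_exists_of_strictOrder_general lt lt_asymm lt_cotrans A B hA
end

section
/- Let X be an archimedean prestreak. Then for every x ∈ X and every b ∈ ℕ with b > 0 there exists an integer a ∈ ℤ such that (a−1)/b < x < (a+1)/b (comparison of elements of X with rationals). -/
/-- A prestreak: a strict order (asymmetric and cotransitive) together with a
commutative additive monoid structure and a commutative multiplicative monoid
structure on the positive part, compatible with the order.  (The intrinsic
topology conditions of the paper are omitted, being vacuous in the classical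
set-theoretic setting.) -/
structure Prestreak (X : Type*) where
  lt : X → X → Prop
  add : X → X → X
  zero : X
  mul : X → X → X
  one : X
  lt_asymm : ∀ a b, ¬ (lt a b ∧ lt b a)
  lt_cotrans : ∀ a b x, lt a b → lt a x ∨ lt x b
  add_comm : ∀ a b, add a b = add b a
  add_assoc : ∀ a b c, add (add a b) c = add a (add b c)
  add_zero : ∀ a, add a zero = a
  zero_lt_one : lt zero one
  mul_pos : ∀ a b, lt zero a → lt zero b → lt zero (mul a b)
  mul_comm : ∀ a b, lt zero a → lt zero b → mul a b = mul b a
  mul_assoc : ∀ a b c, lt zero a → lt zero b → lt zero c →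
    mul (mul a b) c = mul a (mul b c)
  mul_one : ∀ a, lt zero a → mul a one = a
  mul_add : ∀ a b c, lt zero a → lt zero b → lt zero c →
    mul (add a b) c = add (mul a c) (mul b c)
  add_lt_add_iff : ∀ a b x, (lt (add a x) (add b x) ↔ lt a b)
  mul_lt_mul_iff : ∀ a b x, lt zero a → lt zero b → lt zero x →
    (lt (mul a x) (mul b x) ↔ lt a b)

namespace Prestreak

variable {X : Type*}

/-- Multiplication by a natural number: `0·a = 0`, `(n+1)·a = n·a + a`. -/
def nsmul (P : Prestreak X) : ℕ → X → X
  | 0, _ => P.zero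
  | n + 1, a => P.add (nsmul P n a) a

/-- The canonical image of a natural number, `n ↦ n·1`. -/
def ofNat (P : Prestreak X) (n : ℕ) : X := P.nsmul n P.one

/-- Comparison `x < q` of an element of a prestreak with a rational number,
using the canonical representation `q = (q.num⁺ − q.num⁻)/q.den`:
`x < (a−b)/c  :=  c·x + b < a`. -/
def ltQ (P : Prestreak X) (x : X) (q : ℚ) : Prop :=
  P.lt (P.add (P.nsmul q.den x) (P.ofNat ((-q.num).toNat))) (P.ofNat q.num.toNat)

/-- Comparison `q < x` of a rational with an element of a prestreak:
`(a−b)/c < x  :=  a < c·x + b`. -/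
def qLt (P : Prestreak X) (q : ℚ) (x : X) : Prop :=
  P.lt (P.ofNat q.num.toNat) (P.add (P.nsmul q.den x) (P.ofNat ((-q.num).toNat)))

/-- The archimedean property for prestreaks. -/
def Archimedean (P : Prestreak X) : Prop :=
  ∀ a b c d : X, P.lt b d →
    ∃ n : ℕ, P.lt (P.add a (P.nsmul n b)) (P.add c (P.nsmul n d))

/-- Tightness: antisymmetry of `≤` (where `a ≤ b := ¬ b < a`).
A streak is a tight archimedean prestreak. -/
def Tight (P : Prestreak X) : Prop :=
  ∀ a b : X, ¬ P.lt a b → ¬ P.lt b a → a = b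

/-- The apartness relation `a # b := a < b ∨ b < a`. -/
def Apart (P : Prestreak X) (a b : X) : Prop := P.lt a b ∨ P.lt b a

/-- A morphism of prestreaks: preserves `<`, `+`, `0`, `1` and products of
positive elements. -/
def IsHom {Y : Type*} (P : Prestreak X) (Q : Prestreak Y) (f : X → Y) : Prop :=
  (∀ a b, P.lt a b → Q.lt (f a) (f b)) ∧
  (∀ a b, f (P.add a b) = Q.add (f a) (f b)) ∧
  f P.zero = Q.zero ∧ f P.one = Q.one ∧
  (∀ a b, P.lt P.zero a → P.lt P.zero b → f (P.mul a b) = Q.mul (f a) (f b))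

/-- A multiplicative structure on a prestreak: a total multiplication which is
commutative, associative, distributes over addition, has unit `1`, restricts to
the given multiplication on positive elements, and satisfies the multiplicity
condition. -/
def IsMultiplicative (P : Prestreak X) (tmul : X → X → X) : Prop :=
  (∀ a b, tmul a b = tmul b a) ∧
  (∀ a b c, tmul (tmul a b) c = tmul a (tmul b c)) ∧
  (∀ a b c, tmul (P.add a b) c = P.add (tmul a c) (tmul b c)) ∧
  (∀ a, tmul a P.one = a) ∧
  (∀ a b, P.lt P.zero a → P.lt P.zero b → tmul a b = P.mul a b) ∧
  (∀ a b c d, P.lt b a → P.lt d c →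
    P.lt (P.add (tmul a d) (tmul b c)) (P.add (tmul a c) (tmul b d)))

end Prestreak

/-!
Clearing denominators, `(a-1)/b < x < (a+1)/b` says `a - 1 < b·x < a + 1` in the natural-number
comparisons defining `qLt` and `ltQ`; these do not depend on the representation of the rational,
since two representations agree after scaling each by the other's denominator and adding a common
natural number. The archimedean property bounds `y = b·x` by naturals after a shift:
`0 < y + m < N`. Walking down from `N`, cotransitivity of `j < j + 1` against `y + m` either places
`y + m` above `j` or below `j + 1`, which produces `j` with `j < y + m < j + 2`; take
`a = j + 1 - m`.
-/

lemma Rat.num_toNat_mul_add_mul_den {q : ℚ} {A B C : ℕ} (hC : 0 < C)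
    (hq : q = ((A : ℚ) - B) / C) :
    q.num.toNat * C + B * q.den = A * q.den + (-q.num).toNat * C := by
  have hnum : (q.num : ℚ) * C = ((A : ℚ) - B) * q.den := by
    rw [← div_eq_div_iff (by positivity) (by positivity), Rat.num_div_den, hq]
  have hnumZ : q.num * C = ((A : ℤ) - B) * q.den := by exact_mod_cast hnum
  have hsplit : (q.num.toNat : ℤ) - (-q.num).toNat = q.num := by omega
  have : (q.num.toNat : ℤ) * C + B * q.den = A * q.den + (-q.num).toNat * C := by
    linear_combination (C : ℤ) * hsplit + hnumZ
  exact_mod_cast this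

namespace Prestreak

variable {X : Type*} (P : Prestreak X)

lemma lt_trans {a b c : X} (hab : P.lt a b) (hbc : P.lt b c) : P.lt a c :=
  (P.lt_cotrans a b c hab).resolve_right fun hcb => P.lt_asymm b c ⟨hbc, hcb⟩

lemma zero_add (a : X) : P.add P.zero a = a := by
  rw [P.add_comm, P.add_zero]

lemma add_lt_add_iff_left (a b x : X) : P.lt (P.add x a) (P.add x b) ↔ P.lt a b := by
  rw [P.add_comm x a, P.add_comm x b, P.add_lt_add_iff]

lemma add_add_add_comm (a b c d : X) :
    P.add (P.add a b) (P.add c d) = P.add (P.add a c) (P.add b d) := by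
  rw [P.add_assoc, P.add_assoc, ← P.add_assoc b, ← P.add_assoc c, P.add_comm b c]

lemma nsmul_zero (n : ℕ) : P.nsmul n P.zero = P.zero := by
  induction n with
  | zero => rfl
  | succ n ih => rw [nsmul, ih, P.add_zero]

lemma nsmul_add (n : ℕ) (a b : X) :
    P.nsmul n (P.add a b) = P.add (P.nsmul n a) (P.nsmul n b) := by
  induction n with
  | zero => rw [nsmul, nsmul, nsmul, P.add_zero]
  | succ n ih => rw [nsmul, nsmul, nsmul, ih, P.add_add_add_comm]

lemma add_nsmul (m n : ℕ) (a : X) :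
    P.nsmul (m + n) a = P.add (P.nsmul m a) (P.nsmul n a) := by
  induction n with
  | zero => rw [Nat.add_zero, nsmul, P.add_zero]
  | succ n ih => rw [← Nat.add_assoc, nsmul, nsmul, ih, P.add_assoc]

lemma mul_nsmul (m n : ℕ) (a : X) : P.nsmul (m * n) a = P.nsmul m (P.nsmul n a) := by
  induction m with
  | zero => rw [Nat.zero_mul, nsmul, nsmul]
  | succ m ih => rw [Nat.succ_mul, P.add_nsmul, ih, nsmul]

lemma ofNat_add (m n : ℕ) : P.ofNat (m + n) = P.add (P.ofNat m) (P.ofNat n) :=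
  P.add_nsmul m n P.one

lemma nsmul_ofNat (m n : ℕ) : P.nsmul m (P.ofNat n) = P.ofNat (m * n) :=
  (P.mul_nsmul m n P.one).symm

lemma ofNat_one : P.ofNat 1 = P.one :=
  P.zero_add P.one

lemma ofNat_lt_ofNat_succ (n : ℕ) : P.lt (P.ofNat n) (P.ofNat (n + 1)) := by
  rw [← P.add_zero (P.ofNat n), P.ofNat_add, P.add_lt_add_iff_left, P.ofNat_one]
  exact P.zero_lt_one

lemma nsmul_lt_nsmul_iff {n : ℕ} (hn : 0 < n) {u v : X} :
    P.lt (P.nsmul n u) (P.nsmul n v) ↔ P.lt u v := by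
  obtain ⟨n, rfl⟩ := Nat.exists_eq_add_one_of_ne_zero hn.ne'
  induction n with
  | zero => simp only [nsmul, P.zero_add]
  | succ n ih =>
    change P.lt (P.add (P.nsmul (n + 1) u) u) (P.add (P.nsmul (n + 1) v) v) ↔ _
    constructor
    · intro h
      rcases P.lt_cotrans _ _ (P.add (P.nsmul (n + 1) u) v) h with h | h
      · exact (P.add_lt_add_iff_left u v _).mp h
      · exact (ih n.succ_pos).mp ((P.add_lt_add_iff _ _ v).mp h)
    · intro h
      exact P.lt_trans ((P.add_lt_add_iff_left u v _).mpr h)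
        ((P.add_lt_add_iff _ _ v).mpr ((ih n.succ_pos).mpr h))

lemma lt_iff_nsmul_add_ofNat_lt {k : ℕ} (hk : 0 < k) (D : ℕ) {u v : X} :
    P.lt u v ↔ P.lt (P.add (P.nsmul k u) (P.ofNat D)) (P.add (P.nsmul k v) (P.ofNat D)) := by
  rw [P.add_lt_add_iff, P.nsmul_lt_nsmul_iff hk]

lemma nsmul_ofNat_add_ofNat (k A D : ℕ) :
    P.add (P.nsmul k (P.ofNat A)) (P.ofNat D) = P.ofNat (k * A + D) := by
  rw [P.nsmul_ofNat, P.ofNat_add]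

section Representation

variable (x : X)

lemma nsmul_nsmul_add_ofNat_add_ofNat (k C B D : ℕ) :
    P.add (P.nsmul k (P.add (P.nsmul C x) (P.ofNat B))) (P.ofNat D) =
      P.add (P.nsmul (k * C) x) (P.ofNat (k * B + D)) := by
  rw [P.nsmul_add, P.mul_nsmul, P.nsmul_ofNat, P.add_assoc, P.ofNat_add]

lemma ofNat_lt_nsmul_add_ofNat_iff {A B C A' B' C' : ℕ} (hC : 0 < C) (hC' : 0 < C')
    (h : A * C' + B' * C = A' * C + B * C') :
    P.lt (P.ofNat A) (P.add (P.nsmul C x) (P.ofNat B)) ↔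
      P.lt (P.ofNat A') (P.add (P.nsmul C' x) (P.ofNat B')) := by
  rw [P.lt_iff_nsmul_add_ofNat_lt hC' (C * B'),
    P.lt_iff_nsmul_add_ofNat_lt hC (C' * B) (u := P.ofNat A')]
  simp only [P.nsmul_ofNat_add_ofNat, P.nsmul_nsmul_add_ofNat_add_ofNat]
  rw [Nat.mul_comm C' C, show C' * A + C * B' = C * A' + C' * B by linarith,
    show C' * B + C * B' = C * B' + C' * B by ring]

lemma nsmul_add_ofNat_lt_iff {A B C A' B' C' : ℕ} (hC : 0 < C) (hC' : 0 < C')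
    (h : A * C' + B' * C = A' * C + B * C') :
    P.lt (P.add (P.nsmul C x) (P.ofNat B)) (P.ofNat A) ↔
      P.lt (P.add (P.nsmul C' x) (P.ofNat B')) (P.ofNat A') := by
  rw [P.lt_iff_nsmul_add_ofNat_lt hC' (C * B'),
    P.lt_iff_nsmul_add_ofNat_lt hC (C' * B) (v := P.ofNat A')]
  simp only [P.nsmul_ofNat_add_ofNat, P.nsmul_nsmul_add_ofNat_add_ofNat]
  rw [Nat.mul_comm C' C, show C' * A + C * B' = C * A' + C' * B by linarith,
    show C' * B + C * B' = C * B' + C' * B by ring]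

lemma qLt_iff {q : ℚ} {A B C : ℕ} (hC : 0 < C) (hq : q = ((A : ℚ) - B) / C) :
    P.qLt q x ↔ P.lt (P.ofNat A) (P.add (P.nsmul C x) (P.ofNat B)) :=
  P.ofNat_lt_nsmul_add_ofNat_iff x q.pos hC (q.num_toNat_mul_add_mul_den hC hq)

lemma ltQ_iff {q : ℚ} {A B C : ℕ} (hC : 0 < C) (hq : q = ((A : ℚ) - B) / C) :
    P.ltQ x q ↔ P.lt (P.add (P.nsmul C x) (P.ofNat B)) (P.ofNat A) :=
  P.nsmul_add_ofNat_lt_iff x q.pos hC (q.num_toNat_mul_add_mul_den hC hq)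

end Representation

lemma exists_ofNat_lt_lt_ofNat_add_two {z : X} (hz : P.lt P.zero z) {N : ℕ}
    (hN : P.lt z (P.ofNat N)) : ∃ j, P.lt (P.ofNat j) z ∧ P.lt z (P.ofNat (j + 2)) := by
  induction N with
  | zero => exact (P.lt_asymm _ _ ⟨hz, hN⟩).elim
  | succ N ih =>
    cases N with
    | zero => exact ⟨0, hz, P.lt_trans hN (P.ofNat_lt_ofNat_succ 1)⟩
    | succ N =>
      rcases P.lt_cotrans _ _ z (P.ofNat_lt_ofNat_succ N) with hNz | hzN
      · exact ⟨N, hNz, hN⟩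
      · exact ih hzN

namespace Archimedean

variable {P}

lemma exists_lt_ofNat (hA : P.Archimedean) (y : X) : ∃ n, P.lt y (P.ofNat n) := by
  obtain ⟨n, hn⟩ := hA y P.zero P.zero P.one P.zero_lt_one
  rw [P.nsmul_zero, P.add_zero, P.zero_add] at hn
  exact ⟨n, hn⟩

lemma exists_zero_lt_add_ofNat (hA : P.Archimedean) (y : X) :
    ∃ m, P.lt P.zero (P.add y (P.ofNat m)) := by
  obtain ⟨m, hm⟩ := hA P.zero P.zero y P.one P.zero_lt_one
  rw [P.nsmul_zero, P.add_zero] at hm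
  exact ⟨m, hm⟩

end Archimedean

end Prestreak

/-- An archimedean prestreak is a union of rational intervals: for every
`x ∈ X` and every `b ∈ ℕ` with `b > 0` there exists `a ∈ ℤ` such that
`(a−1)/b < x < (a+1)/b`. -/
theorem exists_int_interval_of_archimedean {X : Type*} (P : Prestreak X)
    (hA : P.Archimedean) (x : X) (b : ℕ) (hb : 0 < b) :
    ∃ a : ℤ, P.qLt (((a : ℚ) - 1) / (b : ℚ)) x ∧ P.ltQ x (((a : ℚ) + 1) / (b : ℚ)) := by
  obtain ⟨n, hn⟩ := hA.exists_lt_ofNat (P.nsmul b x)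
  obtain ⟨m, hm⟩ := hA.exists_zero_lt_add_ofNat (P.nsmul b x)
  have hbound : P.lt (P.add (P.nsmul b x) (P.ofNat m)) (P.ofNat (n + m)) := by
    rwa [P.ofNat_add, P.add_lt_add_iff]
  obtain ⟨j, hlow, hup⟩ := P.exists_ofNat_lt_lt_ofNat_add_two hm hbound
  refine ⟨j + 1 - m, (P.qLt_iff x hb ?_).mpr hlow, (P.ltQ_iff x hb ?_).mpr hup⟩ <;>
    push_cast <;> ring
end

section
/- A surjective prestreak morphism f : X → Y between streaks X and Y is an isomorphism: f is bijective and its inverse f⁻¹ : Y → X is again a prestreak morphism. -/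
/-!
Tightness of `X` makes an order-preserving map injective, so `f` is a bijection and its
inverse `g` automatically preserves `+`, `0`, `1` and products (apply `f` and use injectivity).
The only real point is that `g` preserves `<`, i.e. that `f` reflects the order, which uses
that `Y` is archimedean: from `f a < f b` we get `n` with `1 + n·f a < n·f b`, i.e.
`f (1 + n·a) < f (n·b)`, so `n·b < 1 + n·a` fails; cotransitivity applied to
`n·a < 1 + n·a` then gives `n·a < n·b`, and cancelling `n` gives `a < b`.
-/

namespace Prestreak

variable {X Y : Type*}

theorem lt_irrefl (P : Prestreak X) (a : X) : ¬ P.lt a a :=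
  fun h => P.lt_asymm a a ⟨h, h⟩

theorem lt_one_add (P : Prestreak X) (a : X) : P.lt a (P.add P.one a) := by
  have h := (P.add_lt_add_iff P.zero P.one a).2 P.zero_lt_one
  rwa [P.add_comm P.zero a, P.add_zero] at h

theorem not_add_lt_add (P : Prestreak X) {a b c d : X}
    (hab : ¬ P.lt a b) (hcd : ¬ P.lt c d) : ¬ P.lt (P.add a c) (P.add b d) := by
  intro h
  rcases P.lt_cotrans _ _ (P.add b c) h with h' | h'
  · exact hab ((P.add_lt_add_iff a b c).1 h')
  · rw [P.add_comm b c, P.add_comm b d] at h'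
    exact hcd ((P.add_lt_add_iff c d b).1 h')

theorem lt_of_nsmul_lt_nsmul (P : Prestreak X) {a b : X} (n : ℕ)
    (h : P.lt (P.nsmul n a) (P.nsmul n b)) : P.lt a b := by
  by_contra hab
  induction n with
  | zero => exact P.lt_irrefl _ h
  | succ n ih => exact P.not_add_lt_add ih hab h

namespace IsHom

variable {P : Prestreak X} {Q : Prestreak Y} {f : X → Y}

theorem map_nsmul (hf : P.IsHom Q f) (n : ℕ) (a : X) :
    f (P.nsmul n a) = Q.nsmul n (f a) := by
  induction n with
  | zero => exact hf.2.2.1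
  | succ n ih => rw [nsmul, nsmul, hf.2.1, ih]

theorem lt_of_map_lt (hf : P.IsHom Q f) (hQA : Q.Archimedean) {a b : X}
    (h : Q.lt (f a) (f b)) : P.lt a b := by
  obtain ⟨n, hn⟩ := hQA Q.one (f a) Q.zero (f b) h
  rw [Q.add_comm Q.zero, Q.add_zero, ← hf.map_nsmul, ← hf.map_nsmul,
    ← hf.2.2.2.1, ← hf.2.1] at hn
  have hnot : ¬ P.lt (P.nsmul n b) (P.add P.one (P.nsmul n a)) :=
    fun hc => Q.lt_asymm _ _ ⟨hn, hf.1 _ _ hc⟩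
  exact P.lt_of_nsmul_lt_nsmul n
    ((P.lt_cotrans _ _ (P.nsmul n b) (P.lt_one_add (P.nsmul n a))).resolve_right hnot)

theorem injective (hf : P.IsHom Q f) (hPT : P.Tight) : Function.Injective f := by
  intro a b hab
  refine hPT a b (fun h => ?_) (fun h => ?_)
  · exact Q.lt_irrefl _ (hab ▸ hf.1 a b h)
  · exact Q.lt_irrefl _ (hab ▸ hf.1 b a h)

theorem of_rightInverse (hf : P.IsHom Q f) (hQA : Q.Archimedean)
    (hinj : Function.Injective f) {g : Y → X} (hg : Function.RightInverse g f) :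
    Q.IsHom P g := by
  have hpos : ∀ {a}, Q.lt Q.zero a → P.lt P.zero (g a) := fun ha =>
    hf.lt_of_map_lt hQA (by rwa [hg, hf.2.2.1])
  refine ⟨fun a b h => hf.lt_of_map_lt hQA (by rwa [hg, hg]), fun a b => ?_, ?_, ?_,
    fun a b ha hb => ?_⟩
  · exact hinj (by rw [hg, hf.2.1, hg, hg])
  · exact hinj (by rw [hg, hf.2.2.1])
  · exact hinj (by rw [hg, hf.2.2.2.1])
  · exact hinj (by rw [hg, hf.2.2.2.2 _ _ (hpos ha) (hpos hb), hg, hg])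

end IsHom

end Prestreak

theorem surjective_streak_hom_is_iso_general {X Y : Type*}
    (P : Prestreak X) (hPT : P.Tight)
    (Q : Prestreak Y) (hQA : Q.Archimedean)
    (f : X → Y) (hf : P.IsHom Q f) (hsurj : Function.Surjective f) :
    Function.Bijective f ∧
      ∃ g : Y → X, Function.LeftInverse g f ∧ Function.RightInverse g f ∧
        Q.IsHom P g := by
  have hinj := hf.injective hPT
  let g := Function.surjInv hsurj
  have hg : Function.RightInverse g f := Function.rightInverse_surjInv hsurj
  exact ⟨⟨hinj, hsurj⟩, g, Function.leftInverse_surjInv ⟨hinj, hsurj⟩, hg,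
    hf.of_rightInverse hQA hinj hg⟩

/-- A surjective prestreak morphism between streaks is an isomorphism: it is
bijective and its inverse is again a prestreak morphism. -/
theorem surjective_streak_hom_is_iso {X Y : Type*}
    (P : Prestreak X) (hPA : P.Archimedean) (hPT : P.Tight)
    (Q : Prestreak Y) (hQA : Q.Archimedean) (hQT : Q.Tight)
    (f : X → Y) (hf : P.IsHom Q f) (hsurj : Function.Surjective f) :
    Function.Bijective f ∧
      ∃ g : Y → X, Function.LeftInverse g f ∧ Function.RightInverse g f ∧
        Q.IsHom P g :=
  surjective_streak_hom_is_iso_general P hPT Q hQA f hf hsurj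
end
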